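/- arXiv:2403.01605 — 5 statements merged into one kernel-verified Lean document; each statement's English description precedes it below -/
import Mathlib

section
/- The gradient of the log discounted occupancy measure satisfies the backward recursion: d_γ(s',a')(∇_θ log d_γ(s',a') - ∇_θ log π_θ(a'|s')) = γ Σ_{s,a} d_γ(s,a) P(s'|s,a) π_θ(a'|s') ∇_θ log d_γ(s,a), for all (s',a'). -/
open Finset

/-!
Differentiating the Bellman flow equation gives `∇d_γ(s') = γ ∑_{s,a} ∇d_γ(s,a) P(s'|s,a)`,
since `d₀` does not depend on `θ`. The product rule applied to `d_γ(s',a') = d_γ(s') π(a'|s')`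
then yields `∇d_γ(s',a') - d_γ(s') ∇π(a'|s') = γ π(a'|s') ∑_{s,a} ∇d_γ(s,a) P(s'|s,a)`, which is
the claim after writing each gradient `∇f` as `f ∇log f`.
-/

theorem hasDerivAt_of_bellman_flow {S A : Type*} [Fintype S] [Fintype A]
    (P : S → A → S → ℝ) (d₀ : S → ℝ) (γ θ₀ : ℝ) (dS : ℝ → S → ℝ) (dSA : ℝ → S → A → ℝ)
    (hflow : ∀ θ s', dS θ s' = (1 - γ) * d₀ s' + γ * ∑ s, ∑ a, dSA θ s a * P s a s')
    (g : S → A → ℝ) (hderiv : ∀ s a, HasDerivAt (fun θ => dSA θ s a) (g s a) θ₀) (s' : S) :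
    HasDerivAt (fun θ => dS θ s') (γ * ∑ s, ∑ a, g s a * P s a s') θ₀ := by
  rw [show (fun θ => dS θ s') = _ from funext fun θ => hflow θ s']
  exact ((HasDerivAt.fun_sum fun s _ => HasDerivAt.fun_sum fun a _ =>
    (hderiv s a).mul_const (P s a s')).const_mul γ).const_add _

theorem mul_sub_div_div_of_eq_mul {K : Type*} [Field K] {d x p g h : K} (hd : d = x * p) (hd0 : d ≠ 0) (hp0 : p ≠ 0) :
    d * (g / d - h / p) = g - x * h := by
  rw [mul_sub, mul_div_cancel₀ _ hd0, hd, mul_assoc, mul_div_cancel₀ _ hp0]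

theorem stmt_5_general {S A : Type*} [Fintype S] [Fintype A]
    (P : S → A → S → ℝ) (d₀ : S → ℝ) (γ : ℝ)
    (θ₀ : ℝ)
    (π : ℝ → S → A → ℝ)        -- parameterized policy
    (dS : ℝ → S → ℝ)            -- state occupancy d_γ(s), as a function of θ
    (dSA : ℝ → S → A → ℝ)       -- state-action occupancy d_γ(s,a)
    (hdecomp : ∀ θ s a, dSA θ s a = dS θ s * π θ s a)
    (hflow : ∀ θ s', dS θ s' =
      (1 - γ) * d₀ s' + γ * ∑ s, ∑ a, dSA θ s a * P s a s')
    (g : S → A → ℝ) (gπ : S → A → ℝ)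
    (hderiv : ∀ s a, HasDerivAt (fun θ => dSA θ s a) (g s a) θ₀)
    (hπderiv : ∀ s a, HasDerivAt (fun θ => π θ s a) (gπ s a) θ₀)
    (hpos : ∀ s a, 0 < dSA θ₀ s a) (hπpos : ∀ s a, 0 < π θ₀ s a) :
    ∀ s' a',
      dSA θ₀ s' a' * (g s' a' / dSA θ₀ s' a' - gπ s' a' / π θ₀ s' a') =
      γ * ∑ s, ∑ a, dSA θ₀ s a * P s a s' * π θ₀ s' a' *
        (g s a / dSA θ₀ s a) := by
  intro s' a'
  have hproduct : g s' a' = γ * (∑ s, ∑ a, g s a * P s a s') * π θ₀ s' a' + dS θ₀ s' * gπ s' a' :=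
    (hderiv s' a').unique <|
      ((hasDerivAt_of_bellman_flow P d₀ γ θ₀ dS dSA hflow g hderiv s').mul
        (hπderiv s' a')).congr_of_eventuallyEq (.of_forall fun θ => hdecomp θ s' a')
  have hcancel : ∀ s a, dSA θ₀ s a * P s a s' * π θ₀ s' a' * (g s a / dSA θ₀ s a) =
      g s a * P s a s' * π θ₀ s' a' := fun s a => by
    field_simp [(hpos s a).ne']
  rw [mul_sub_div_div_of_eq_mul (hdecomp θ₀ s' a') (hpos s' a').ne' (hπpos s' a').ne', hproduct]
  simp_rw [hcancel, ← sum_mul]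
  ring

/-- Backward recursion for the gradient of the log discounted occupancy measure:
`d_γ(s',a')(∇log d_γ(s',a') - ∇log π(a'|s')) =
  γ ∑_{s,a} d_γ(s,a) P(s'|s,a) π(a'|s') ∇log d_γ(s,a)`.
The parameter `θ` is scalar; gradients are derivatives in `θ` at `θ₀`. -/
theorem stmt_5 {S A : Type*} [Fintype S] [Fintype A]
    (P : S → A → S → ℝ) (d₀ : S → ℝ) (γ : ℝ) (hγ0 : 0 ≤ γ) (hγ1 : γ ≤ 1)
    (θ₀ : ℝ)
    (π : ℝ → S → A → ℝ)        -- parameterized policy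
    (dS : ℝ → S → ℝ)            -- state occupancy d_γ(s), as a function of θ
    (dSA : ℝ → S → A → ℝ)       -- state-action occupancy d_γ(s,a)
    (hdecomp : ∀ θ s a, dSA θ s a = dS θ s * π θ s a)
    (hflow : ∀ θ s', dS θ s' =
      (1 - γ) * d₀ s' + γ * ∑ s, ∑ a, dSA θ s a * P s a s')
    (g : S → A → ℝ) (gπ : S → A → ℝ)
    (hderiv : ∀ s a, HasDerivAt (fun θ => dSA θ s a) (g s a) θ₀)
    (hπderiv : ∀ s a, HasDerivAt (fun θ => π θ s a) (gπ s a) θ₀)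
    (hpos : ∀ s a, 0 < dSA θ₀ s a) (hπpos : ∀ s a, 0 < π θ₀ s a) :
    ∀ s' a',
      dSA θ₀ s' a' * (g s' a' / dSA θ₀ s' a' - gπ s' a' / π θ₀ s' a') =
      γ * ∑ s, ∑ a, dSA θ₀ s a * P s a s' * π θ₀ s' a' *
        (g s a / dSA θ₀ s a) :=
  stmt_5_general P d₀ γ θ₀ π dS dSA hdecomp hflow g gπ hderiv hπderiv hpos hπpos
end

section
/- The backward operator Y_γ defined by (Y_γ·w)(s',a') := γ Σ_{s,a} P_b(s,a|s',a') w(s,a) + g(s',a') is a γ-contraction in the d_γ-weighted L¹ norm: for any U,V: S×A → ℝⁿ, Σ_{s',a'} d_γ(s',a') |Y_γU(s',a') - Y_γV(s',a')| ≤ γ Σ_{s,a} d_γ(s,a) |U(s,a) - V(s,a)|. -/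
open Finset

section WeightedL1

variable {ι E : Type*} [Fintype ι] [SeminormedAddCommGroup E] [NormedSpace ℝ E]

theorem norm_sum_smul_le_sum_mul_norm {K : ι → ℝ} (hK : ∀ i, 0 ≤ K i) (w : ι → E) :
    ‖∑ i, K i • w i‖ ≤ ∑ i, K i * ‖w i‖ :=
  (norm_sum_le _ _).trans_eq <| sum_congr rfl fun i _ => by
    rw [norm_smul, Real.norm_of_nonneg (hK i)]

theorem sum_mul_norm_sum_smul_le_of_sum_mul_le {μ : ι → ℝ} (hμ : ∀ j, 0 ≤ μ j)
    {K : ι → ι → ℝ} (hK : ∀ i j, 0 ≤ K i j) (hKμ : ∀ i, ∑ j, μ j * K i j ≤ μ i)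
    (w : ι → E) :
    ∑ j, μ j * ‖∑ i, K i j • w i‖ ≤ ∑ i, μ i * ‖w i‖ :=
  calc ∑ j, μ j * ‖∑ i, K i j • w i‖
      ≤ ∑ j, μ j * ∑ i, K i j * ‖w i‖ := sum_le_sum fun j _ =>
        mul_le_mul_of_nonneg_left (norm_sum_smul_le_sum_mul_norm (hK · j) w) (hμ j)
    _ = ∑ i, (∑ j, μ j * K i j) * ‖w i‖ := by
        simp only [mul_sum, sum_mul, mul_assoc]
        exact sum_comm
    _ ≤ ∑ i, μ i * ‖w i‖ := sum_le_sum fun i _ =>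
        mul_le_mul_of_nonneg_right (hKμ i) (norm_nonneg _)

end WeightedL1

section BackwardKernel

variable {S A : Type*} {P : S → A → S → ℝ} {π : S → A → ℝ}
  {d : S → A → ℝ} {Pb : S → A → S → A → ℝ}

theorem backwardKernel_nonneg (hPnonneg : ∀ s a s', 0 ≤ P s a s') (hπnonneg : ∀ s a, 0 ≤ π s a)
    (hdnonneg : ∀ s a, 0 ≤ d s a)
    (hPb : ∀ s a s' a', Pb s a s' a' = d s a * P s a s' * π s' a' / d s' a')
    (s : S) (a : A) (s' : S) (a' : A) : 0 ≤ Pb s a s' a' := by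
  rw [hPb]
  have := hdnonneg s a; have := hPnonneg s a s'; have := hπnonneg s' a'; have := hdnonneg s' a'
  positivity

/-- The weight cancels: `d(s',a') P_b(s,a|s',a') = d(s,a) P(s'|s,a) π(a'|s')`, and the two
normalisations of `P` and `π` leave `d(s,a)`. -/
theorem sum_mul_backwardKernel_eq [Fintype S] [Fintype A] (hPsum : ∀ s a, ∑ s', P s a s' = 1)
    (hπsum : ∀ s, ∑ a, π s a = 1) (hdne : ∀ s a, d s a ≠ 0)
    (hPb : ∀ s a s' a', Pb s a s' a' = d s a * P s a s' * π s' a' / d s' a')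
    (s : S) (a : A) : ∑ y : S × A, d y.1 y.2 * Pb s a y.1 y.2 = d s a := by
  simp only [hPb, mul_div_cancel₀ _ (hdne _ _), Fintype.sum_prod_type, ← mul_sum, hπsum,
    mul_one, hPsum]

end BackwardKernel

theorem stmt_7_general {S A : Type*} [Fintype S] [Fintype A] {n : ℕ}
    (P : S → A → S → ℝ) (π : S → A → ℝ)
    (hPnonneg : ∀ s a s', 0 ≤ P s a s') (hPsum : ∀ s a, ∑ s', P s a s' = 1)
    (hπnonneg : ∀ s a, 0 ≤ π s a) (hπsum : ∀ s, ∑ a, π s a = 1)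
    (γ : ℝ) (hγ0 : 0 ≤ γ)
    (d : S → A → ℝ) (hdpos : ∀ s a, 0 < d s a)
    (g : S → A → (Fin n → ℝ))
    -- the backward kernel
    (Pb : S → A → S → A → ℝ)
    (hPb : ∀ s a s' a', Pb s a s' a' = d s a * P s a s' * π s' a' / d s' a')
    -- the backward operator
    (Y : (S → A → (Fin n → ℝ)) → S → A → (Fin n → ℝ))
    (hY : ∀ w s' a', Y w s' a' =
      γ • (∑ s, ∑ a, Pb s a s' a' • w s a) + g s' a')
    (U V : S → A → (Fin n → ℝ)) :
    ∑ s', ∑ a', d s' a' * ‖Y U s' a' - Y V s' a'‖ ≤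
      γ * ∑ s, ∑ a, d s a * ‖U s a - V s a‖ := by
  have hdiff : ∀ s' a', Y U s' a' - Y V s' a' =
      γ • ∑ s, ∑ a, Pb s a s' a' • (U s a - V s a) := by
    intro s' a'
    simp only [hY, add_sub_add_right_eq_sub, ← smul_sub, ← sum_sub_distrib]
  have hcontract := sum_mul_norm_sum_smul_le_of_sum_mul_le (fun y : S × A => (hdpos y.1 y.2).le)
    (fun (x y : S × A) => backwardKernel_nonneg hPnonneg hπnonneg (fun s a => (hdpos s a).le) hPb
      x.1 x.2 y.1 y.2)
    (fun x : S × A => (sum_mul_backwardKernel_eq hPsum hπsum (fun s a => (hdpos s a).ne') hPb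
      x.1 x.2).le)
    (fun x : S × A => U x.1 x.2 - V x.1 x.2)
  simp only [Fintype.sum_prod_type] at hcontract
  calc ∑ s', ∑ a', d s' a' * ‖Y U s' a' - Y V s' a'‖
      = γ * ∑ s', ∑ a', d s' a' * ‖∑ s, ∑ a, Pb s a s' a' • (U s a - V s a)‖ := by
        simp only [hdiff, norm_smul, Real.norm_of_nonneg hγ0, mul_sum, mul_left_comm γ]
    _ ≤ γ * ∑ s, ∑ a, d s a * ‖U s a - V s a‖ := mul_le_mul_of_nonneg_left hcontract hγ0

/-- The backward operator `Y_γ w (s',a') = γ ∑_{s,a} P_b(s,a|s',a') w(s,a) + g(s',a')`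
is a `γ`-contraction in the `d_γ`-weighted L¹ norm (values in `ℝⁿ`, with a norm). -/
theorem stmt_7 {S A : Type*} [Fintype S] [Fintype A] {n : ℕ}
    (P : S → A → S → ℝ) (π : S → A → ℝ)
    (hPnonneg : ∀ s a s', 0 ≤ P s a s') (hPsum : ∀ s a, ∑ s', P s a s' = 1)
    (hπnonneg : ∀ s a, 0 ≤ π s a) (hπsum : ∀ s, ∑ a, π s a = 1)
    (γ : ℝ) (hγ0 : 0 ≤ γ) (hγ1 : γ < 1)
    (d : S → A → ℝ) (hdpos : ∀ s a, 0 < d s a) (hdsum : ∑ s, ∑ a, d s a = 1)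
    (g : S → A → (Fin n → ℝ))
    -- the backward kernel
    (Pb : S → A → S → A → ℝ)
    (hPb : ∀ s a s' a', Pb s a s' a' = d s a * P s a s' * π s' a' / d s' a')
    -- the backward operator
    (Y : (S → A → (Fin n → ℝ)) → S → A → (Fin n → ℝ))
    (hY : ∀ w s' a', Y w s' a' =
      γ • (∑ s, ∑ a, Pb s a s' a' • w s a) + g s' a')
    (U V : S → A → (Fin n → ℝ)) :
    ∑ s', ∑ a', d s' a' * ‖Y U s' a' - Y V s' a'‖ ≤
      γ * ∑ s, ∑ a, d s a * ‖U s a - V s a‖ :=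
  stmt_7_general P π hPnonneg hPsum hπnonneg hπsum γ hγ0 d hdpos g Pb hPb Y hY U V
end

section
/- For γ ∈ [0,1), the iterates w_{k} = Y_γ · w_{k-1} of the backward operator converge, and the limit is the unique fixed point of Y_γ, which equals ∇_θ log d_γ^{π_θ}. In matrix form: lim_{k→∞} Y_γ^k W₀ = D^{-1}(I - γP_πᵀ)^{-1} D G for any initial W₀, where D = diag(d_γ), P_π is the induced state-action transition matrix, and G is the matrix of ∇_θ log π_θ values. -/
/-!
Write `Y W = A W + G` with `A = D⁻¹ (γ Pπᵀ) D`. Since `Pπ` is row-stochastic, `‖γ Pπ‖∞ ≤ γ < 1`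
in the max-row-sum operator norm, so `(γ Pπ)ᵏ → 0` and `1 - γ Pπ` is invertible (Neumann series);
transposing and conjugating by the diagonal `D`, also `Aᵏ → 0` and `1 - γ Pπᵀ` is invertible.
Then `W⋆ = D⁻¹ (1 - γ Pπᵀ)⁻¹ D G` is a fixed point, and `Yᵏ W₀ = W⋆ + Aᵏ (W₀ - W⋆) → W⋆`.
A fixed point `W` has constant iterates, which also tend to `W⋆`, so `W = W⋆`.
-/

open Matrix Filter Topology Function

section AffineIteration

variable {m p α : Type*} [Fintype m] [DecidableEq m] [Ring α]

theorem iterate_mul_add_eq (A : Matrix m m α) (G W₀ W : Matrix m p α)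
    (hW : IsFixedPt (fun V => A * V + G) W) (k : ℕ) :
    (fun V => A * V + G)^[k] W₀ = W + A ^ k * (W₀ - W) := by
  induction k with
  | zero => simp
  | succ k ih =>
    rw [iterate_succ_apply', ih, pow_succ', Matrix.mul_assoc, Matrix.mul_add, add_right_comm,
      hW.eq]

variable [TopologicalSpace α] [IsTopologicalRing α] {A : Matrix m m α} {G W : Matrix m p α}

theorem tendsto_iterate_mul_add (hA : Tendsto (A ^ ·) atTop (𝓝 0))
    (hW : IsFixedPt (fun V => A * V + G) W) (W₀ : Matrix m p α) :
    Tendsto (fun k => (fun V => A * V + G)^[k] W₀) atTop (𝓝 W) := by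
  have hmul : Tendsto (fun k => A ^ k * (W₀ - W)) atTop (𝓝 0) := by
    simpa [comp_def] using ((continuous_id.matrix_mul continuous_const).tendsto 0).comp hA
  simpa [iterate_mul_add_eq A G W₀ W hW] using tendsto_const_nhds.add hmul

theorem isFixedPt_mul_add_iff [T2Space α] (hA : Tendsto (A ^ ·) atTop (𝓝 0))
    (hW : IsFixedPt (fun V => A * V + G) W) (V : Matrix m p α) :
    IsFixedPt (fun V => A * V + G) V ↔ V = W := by
  refine ⟨fun hV => ?_, fun h => h ▸ hW⟩
  have h := tendsto_iterate_mul_add hA hW V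
  rw [funext fun k => (hV.iterate k).eq] at h
  exact tendsto_const_nhds_iff.1 h

end AffineIteration

section Conjugation

variable {m p α : Type*} [Fintype m] [DecidableEq m] [CommRing α] {D T : Matrix m m α}

theorem isFixedPt_conj_mul_add (hD : IsUnit D.det) (hT : IsUnit (1 - T).det)
    (G : Matrix m p α) :
    IsFixedPt (fun V => D⁻¹ * T * D * V + G) (D⁻¹ * (1 - T)⁻¹ * D * G) := by
  have hTinv : T * (1 - T)⁻¹ = (1 - T)⁻¹ - 1 := by
    have h := mul_nonsing_inv _ hT
    rw [Matrix.sub_mul, Matrix.one_mul, sub_eq_iff_eq_add'] at h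
    exact eq_sub_of_add_eq h.symm
  show D⁻¹ * T * D * (D⁻¹ * (1 - T)⁻¹ * D * G) + G = _
  simp only [Matrix.mul_assoc, mul_nonsing_inv_cancel_left _ _ hD]
  rw [← Matrix.mul_assoc T, hTinv, Matrix.sub_mul, Matrix.one_mul, Matrix.mul_sub,
    nonsing_inv_mul_cancel_left _ _ hD, sub_add_cancel]

theorem tendsto_pow_conj [TopologicalSpace α] [IsTopologicalRing α] (hD : IsUnit D.det)
    (hT : Tendsto (T ^ ·) atTop (𝓝 0)) : Tendsto ((D⁻¹ * T * D) ^ ·) atTop (𝓝 0) := by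
  obtain ⟨u, rfl⟩ := (isUnit_iff_isUnit_det D).2 hD
  simp_rw [← coe_units_inv, Units.conj_pow']
  simpa using (hT.const_mul _).mul_const _

end Conjugation

section RowStochastic

attribute [local instance] Matrix.linftyOpNormedRing Matrix.linftyOpNormedAlgebra

variable {m : Type*} [Fintype m] [DecidableEq m] {P : Matrix m m ℝ} {γ : ℝ}

theorem linfty_opNorm_le_one_of_mem_rowStochastic (hP : P ∈ rowStochastic ℝ m) : ‖P‖ ≤ 1 := by
  have hrow (i : m) : ∑ j, ‖P i j‖₊ = 1 := by
    ext
    simp [Real.norm_of_nonneg (nonneg_of_mem_rowStochastic hP), sum_row_of_mem_rowStochastic hP]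
  rw [linfty_opNorm_def, NNReal.coe_le_one]
  exact Finset.sup_le fun i _ => (hrow i).le

theorem linfty_opNorm_smul_lt_one_of_mem_rowStochastic (hP : P ∈ rowStochastic ℝ m)
    (hγ : |γ| < 1) : ‖γ • P‖ < 1 := by
  rw [norm_smul, Real.norm_eq_abs]
  exact mul_lt_one_of_nonneg_of_lt_one_left (abs_nonneg γ) hγ
    (linfty_opNorm_le_one_of_mem_rowStochastic hP)

theorem tendsto_pow_smul_transpose_of_mem_rowStochastic (hP : P ∈ rowStochastic ℝ m)
    (hγ : |γ| < 1) : Tendsto ((γ • Pᵀ) ^ ·) atTop (𝓝 0) := by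
  have := (continuous_id.matrix_transpose.tendsto 0).comp <|
    tendsto_pow_atTop_nhds_zero_of_norm_lt_one
      (linfty_opNorm_smul_lt_one_of_mem_rowStochastic hP hγ)
  simpa [comp_def, transpose_pow] using this

theorem isUnit_det_one_sub_smul_transpose_of_mem_rowStochastic (hP : P ∈ rowStochastic ℝ m)
    (hγ : |γ| < 1) : IsUnit (1 - γ • Pᵀ).det := by
  have := (isUnit_iff_isUnit_det _).1 <|
    isUnit_one_sub_of_norm_lt_one (linfty_opNorm_smul_lt_one_of_mem_rowStochastic hP hγ)
  rwa [← det_transpose, transpose_sub, transpose_one, transpose_smul] at this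

end RowStochastic

/-- For `γ ∈ [0,1)`, the iterates of the backward operator
`Y W = γ D⁻¹ Pπᵀ D W + G` converge to its unique fixed point
`D⁻¹ (I - γPπᵀ)⁻¹ D G`, which equals `∇_θ log d_γ`. -/
theorem stmt_9 {ι : Type*} [Fintype ι] [DecidableEq ι] {n : ℕ}
    (Pπ : Matrix ι ι ℝ)
    (hPnonneg : ∀ i j, 0 ≤ Pπ i j) (hProw : ∀ i, ∑ j, Pπ i j = 1)
    (γ : ℝ) (hγ0 : 0 ≤ γ) (hγ1 : γ < 1)
    (dγ : ι → ℝ) (hdpos : ∀ i, 0 < dγ i)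
    (D : Matrix ι ι ℝ) (hD : D = Matrix.diagonal dγ)
    (G : Matrix ι (Fin n) ℝ)
    (Y : Matrix ι (Fin n) ℝ → Matrix ι (Fin n) ℝ)
    (hY : ∀ W, Y W = γ • (D⁻¹ * (Pπᵀ) * D * W) + G) :
    (∀ W₀ : Matrix ι (Fin n) ℝ,
      Tendsto (fun k => Y^[k] W₀) atTop
        (nhds (D⁻¹ * ((1 : Matrix ι ι ℝ) - γ • Pπᵀ)⁻¹ * D * G))) ∧
    (∀ W : Matrix ι (Fin n) ℝ,
      Y W = W ↔ W = D⁻¹ * ((1 : Matrix ι ι ℝ) - γ • Pπᵀ)⁻¹ * D * G) := by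
  have hP : Pπ ∈ rowStochastic ℝ ι := mem_rowStochastic_iff_sum.2 ⟨hPnonneg, hProw⟩
  have hγ : |γ| < 1 := abs_lt.2 ⟨by linarith, hγ1⟩
  have hDdet : IsUnit D.det := by
    rw [hD, det_diagonal]
    exact (Finset.prod_pos fun i _ => hdpos i).ne'.isUnit
  have hA := tendsto_pow_conj hDdet (tendsto_pow_smul_transpose_of_mem_rowStochastic hP hγ)
  have hfix := isFixedPt_conj_mul_add hDdet
    (isUnit_det_one_sub_smul_transpose_of_mem_rowStochastic hP hγ) G
  obtain rfl : Y = fun W => D⁻¹ * (γ • Pπᵀ) * D * W + G := by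
    funext W
    rw [hY, Matrix.mul_smul, Matrix.smul_mul, Matrix.smul_mul]
  exact ⟨tendsto_iterate_mul_add hA hfix, isFixedPt_mul_add_iff hA hfix⟩
end

section
/- Policy gradient consistency: for γ ∈ [0,1), E_{(s,a)∼d_γ}[∇_θ log d_γ(s,a) · r(s,a)] = E_{(s,a)∼d_γ}[Q_γ(s,a) · ∇_θ log π_θ(a|s)], where Q_γ satisfies the Bellman equation Q_γ(s,a) = r(s,a) + γ E_{s'∼P(·|s,a), a'∼π(·|s')}[Q_γ(s',a')]. -/
/-!
Write `T` for the state–action transition matrix `T((s,a),(s',a')) = P(s'|s,a) π(a'|s')`.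
The Bellman equation reads `Q = r + γ T Q`, and the backward identity reads
`d ∇log d - d ∇log π = γ (d ∇log d) T`. Pairing the first with `d ∇log d` and the second
with `Q`, the two `γ`-terms agree because `⟪x, T Q⟫ = ⟪x T, Q⟫`, and they cancel.
-/

open Matrix

theorem Matrix.dotProduct_eq_of_adjoint_equations {ι R : Type*} [Fintype ι] [CommRing R]
    (M : Matrix ι ι R) (γ : R) {x y q r : ι → R}
    (hx : x - y = γ • (x ᵥ* M)) (hq : q = r + γ • (M *ᵥ q)) :
    x ⬝ᵥ r = y ⬝ᵥ q := by
  have hr : r = q - γ • (M *ᵥ q) := eq_sub_of_add_eq hq.symm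
  calc x ⬝ᵥ r = x ⬝ᵥ q - γ • (x ᵥ* M) ⬝ᵥ q := by
        rw [hr, dotProduct_sub, dotProduct_smul, dotProduct_mulVec, smul_dotProduct]
    _ = y ⬝ᵥ q := by rw [← hx, sub_dotProduct, sub_sub_cancel]

namespace MDP

variable {S A : Type*} [Fintype S] [Fintype A] (P : S → A → S → ℝ) (π : S → A → ℝ)

def stateActionTransition : Matrix (S × A) (S × A) ℝ :=
  fun p q => P p.1 p.2 q.1 * π q.1 q.2

theorem stateActionTransition_mulVec (f : S × A → ℝ) (s : S) (a : A) :
    (stateActionTransition P π *ᵥ f) (s, a) = ∑ s', P s a s' * ∑ a', π s' a' * f (s', a') := by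
  simp only [mulVec, dotProduct, stateActionTransition, Fintype.sum_prod_type, Finset.mul_sum,
    mul_assoc]

theorem vecMul_stateActionTransition (g : S × A → ℝ) (s' : S) (a' : A) :
    (g ᵥ* stateActionTransition P π) (s', a') = ∑ s, ∑ a, g (s, a) * P s a s' * π s' a' := by
  simp only [vecMul, dotProduct, stateActionTransition, Fintype.sum_prod_type, mul_assoc]

end MDP

theorem stmt_12_general {S A : Type*} [Fintype S] [Fintype A]
    (P : S → A → S → ℝ) (π : S → A → ℝ) (r : S → A → ℝ)
    (γ : ℝ)
    (d : S → A → ℝ)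
    (gld : S → A → ℝ)   -- ∇_θ log d_γ(s,a)
    (glπ : S → A → ℝ)   -- ∇_θ log π_θ(a|s)
    -- the backward identity characterizing ∇log d_γ
    (hldg : ∀ s' a', d s' a' * (gld s' a' - glπ s' a') =
      γ * ∑ s, ∑ a, d s a * P s a s' * π s' a' * gld s a)
    (Q : S → A → ℝ)
    -- Bellman equation for Q_γ
    (hQ : ∀ s a, Q s a = r s a + γ * ∑ s', P s a s' * ∑ a', π s' a' * Q s' a') :
    ∑ s, ∑ a, d s a * gld s a * r s a = ∑ s, ∑ a, d s a * Q s a * glπ s a := by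
  have key := (MDP.stateActionTransition P π).dotProduct_eq_of_adjoint_equations γ
    (x := fun p => d p.1 p.2 * gld p.1 p.2) (y := fun p => d p.1 p.2 * glπ p.1 p.2)
    (q := fun p => Q p.1 p.2) (r := fun p => r p.1 p.2)
    (funext fun ⟨s', a'⟩ => by
      simp only [Pi.sub_apply, Pi.smul_apply, smul_eq_mul, MDP.vecMul_stateActionTransition,
        ← mul_sub, hldg]
      simp only [mul_right_comm _ (gld _ _)])
    (funext fun ⟨s, a⟩ => by
      simp only [Pi.add_apply, Pi.smul_apply, smul_eq_mul, MDP.stateActionTransition_mulVec]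
      exact hQ s a)
  simpa only [dotProduct, Fintype.sum_prod_type, mul_right_comm _ (glπ _ _)] using key

/-- Policy gradient consistency:
`E_{d_γ}[∇log d_γ(s,a) r(s,a)] = E_{d_γ}[Q_γ(s,a) ∇log π(a|s)]`,
where `Q_γ` satisfies the Bellman equation. Gradients are derivatives with
respect to a scalar parameter, represented by the functions `gld`, `glπ`. -/
theorem stmt_12 {S A : Type*} [Fintype S] [Fintype A]
    (P : S → A → S → ℝ) (π : S → A → ℝ) (r : S → A → ℝ)
    (hPnonneg : ∀ s a s', 0 ≤ P s a s') (hPsum : ∀ s a, ∑ s', P s a s' = 1)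
    (hπnonneg : ∀ s a, 0 ≤ π s a) (hπsum : ∀ s, ∑ a, π s a = 1)
    (γ : ℝ) (hγ0 : 0 ≤ γ) (hγ1 : γ < 1)
    (d : S → A → ℝ) (hdpos : ∀ s a, 0 < d s a)
    (gld : S → A → ℝ)   -- ∇_θ log d_γ(s,a)
    (glπ : S → A → ℝ)   -- ∇_θ log π_θ(a|s)
    -- the backward identity characterizing ∇log d_γ
    (hldg : ∀ s' a', d s' a' * (gld s' a' - glπ s' a') =
      γ * ∑ s, ∑ a, d s a * P s a s' * π s' a' * gld s a)
    (Q : S → A → ℝ)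
    -- Bellman equation for Q_γ
    (hQ : ∀ s a, Q s a = r s a + γ * ∑ s', P s a s' * ∑ a', π s' a' * Q s' a') :
    ∑ s, ∑ a, d s a * gld s a * r s a = ∑ s, ∑ a, d s a * Q s a * glπ s a :=
  stmt_12_general P π r γ d gld glπ hldg Q hQ
end

section
/- Residual error identity: for the average-reward occupancy d₁ and any γ ∈ [0,1), E_{(s,a)∼d₁}[∇_θ log d₁(s,a)·r(s,a)] = E_{(s,a)∼d₁}[Q_γ(s,a)·∇_θ log π_θ(a|s)] + (1-γ) E_{s∼d₁}[∇_θ log d₁(s) · V_γ(s)], where V_γ(s) = E_{a∼π(·|s)}[Q_γ(s,a)]. -/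
/-!
Write `F s' = ∑_{s,a} d₁(s,a) P(s'|s,a) ∇log d₁(s,a)` for the gradient flowing into `s'`.
The stationarity identity, after splitting `∇log d₁(s',a') = ∇log d₁(s') + ∇log π(a'|s')`,
says `d₁(s',a') ∇log d₁(s') = π(a'|s') F(s')`; summing over `a'` gives `d₁(s') ∇log d₁(s') = F(s')`.
Substituting the Bellman equation `r = Q_γ - γ P V_γ` into the left-hand side, the reward term
becomes `E_{d₁}[∇log d₁ · Q_γ] - γ ∑ F V_γ`, and the same splitting turns the first summand into
`E_{d₁}[Q_γ ∇log π] + ∑ F V_γ`.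
-/

open Finset

namespace MDP

variable {S A R : Type*} [Fintype S] [Fintype A] [CommRing R]

def inflow (P : S → A → S → R) (d g : S → A → R) (s' : S) : R :=
  ∑ s, ∑ a, d s a * P s a s' * g s a

theorem sum_sum_mul_sum_transition (P : S → A → S → R) (d g : S → A → R) (V : S → R) :
    ∑ s, ∑ a, d s a * g s a * ∑ s', P s a s' * V s' = ∑ s', inflow P d g s' * V s' := by
  simp only [inflow, sum_mul, mul_sum]
  rw [eq_comm, sum_comm]
  refine sum_congr rfl fun s _ => ?_
  rw [sum_comm]
  exact sum_congr rfl fun _ _ => sum_congr rfl fun _ _ => by ring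

theorem mul_gradLogState_eq_mul_inflow {P : S → A → S → R} {π d gld glπ : S → A → R}
    {gldS : S → R} (hdecomp : ∀ s a, gld s a = gldS s + glπ s a)
    (hldg : ∀ s' a', d s' a' * gld s' a' - d s' a' * glπ s' a' =
      ∑ s, ∑ a, d s a * P s a s' * π s' a' * gld s a)
    (s : S) (a : A) : d s a * gldS s = π s a * inflow P d gld s := by
  have h := hldg s a
  rw [hdecomp s a, mul_add, add_sub_cancel_right] at h
  rw [h, inflow, mul_sum]
  exact sum_congr rfl fun _ _ => by rw [mul_sum]; exact sum_congr rfl fun _ _ => by ring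

theorem sum_mul_eq_of_mul_eq_mul {π d : A → R} {x y : R} (hπ : ∑ a, π a = 1)
    (h : ∀ a, d a * x = π a * y) : (∑ a, d a) * x = y := by
  rw [sum_mul, sum_congr rfl fun a _ => h a, ← sum_mul, hπ, one_mul]

theorem sum_sum_mul_gradLog_mul {P : S → A → S → R} {π d gld glπ Q : S → A → R}
    {gldS V : S → R} (hdecomp : ∀ s a, gld s a = gldS s + glπ s a)
    (hstate : ∀ s a, d s a * gldS s = π s a * inflow P d gld s)
    (hV : ∀ s, V s = ∑ a, π s a * Q s a) :
    ∑ s, ∑ a, d s a * gld s a * Q s a =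
      ∑ s, ∑ a, d s a * Q s a * glπ s a + ∑ s, inflow P d gld s * V s := by
  rw [← sum_add_distrib]
  refine sum_congr rfl fun s _ => ?_
  rw [hV, mul_sum, ← sum_add_distrib]
  refine sum_congr rfl fun a _ => ?_
  rw [hdecomp]
  linear_combination Q s a * hstate s a

end MDP

open MDP

theorem stmt_13_general {S A : Type*} [Fintype S] [Fintype A]
    (P : S → A → S → ℝ) (π : S → A → ℝ) (r : S → A → ℝ)
    (hπsum : ∀ s, ∑ a, π s a = 1)
    (γ : ℝ)
    (d₁ : S → A → ℝ)
    (dS : S → ℝ) (hdS : ∀ s, dS s = ∑ a, d₁ s a)  -- state marginal of d₁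
    (gld : S → A → ℝ)   -- ∇_θ log d₁(s,a)
    (gldS : S → ℝ)      -- ∇_θ log d₁(s)
    (glπ : S → A → ℝ)   -- ∇_θ log π_θ(a|s)
    (hdecomp : ∀ s a, gld s a = gldS s + glπ s a)
    -- the (γ = 1) backward identity characterizing ∇log d₁
    (hldg : ∀ s' a', d₁ s' a' * gld s' a' - d₁ s' a' * glπ s' a' =
      ∑ s, ∑ a, d₁ s a * P s a s' * π s' a' * gld s a)
    (Q : S → A → ℝ)
    (hQ : ∀ s a, Q s a = r s a + γ * ∑ s', P s a s' * ∑ a', π s' a' * Q s' a')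
    (V : S → ℝ) (hV : ∀ s, V s = ∑ a, π s a * Q s a) :
    ∑ s, ∑ a, d₁ s a * gld s a * r s a =
      (∑ s, ∑ a, d₁ s a * Q s a * glπ s a) +
      (1 - γ) * ∑ s, dS s * gldS s * V s := by
  have hstate := mul_gradLogState_eq_mul_inflow hdecomp hldg
  have hmarginal : ∀ s, dS s * gldS s = inflow P d₁ gld s := fun s => by
    rw [hdS]; exact sum_mul_eq_of_mul_eq_mul (hπsum s) (hstate s)
  have hbellman : ∀ s a, r s a = Q s a - γ * ∑ s', P s a s' * V s' := fun s a => by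
    simp only [hV]; linarith [hQ s a]
  calc ∑ s, ∑ a, d₁ s a * gld s a * r s a
      = ∑ s, ∑ a, d₁ s a * gld s a * Q s a
          - γ * ∑ s, ∑ a, d₁ s a * gld s a * ∑ s', P s a s' * V s' := by
        simp only [hbellman, mul_sub, sum_sub_distrib, mul_sum (s := univ) (a := γ),
          mul_left_comm γ]
    _ = _ := by
        rw [sum_sum_mul_sum_transition, sum_sum_mul_gradLog_mul hdecomp hstate hV]
        simp only [hmarginal]
        ring

/-- Residual error identity:
`E_{d₁}[∇log d₁(s,a) r(s,a)] = E_{d₁}[Q_γ(s,a) ∇log π(a|s)]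
  + (1-γ) E_{s∼d₁}[∇log d₁(s) V_γ(s)]`. -/
theorem stmt_13 {S A : Type*} [Fintype S] [Fintype A]
    (P : S → A → S → ℝ) (π : S → A → ℝ) (r : S → A → ℝ)
    (hPnonneg : ∀ s a s', 0 ≤ P s a s') (hPsum : ∀ s a, ∑ s', P s a s' = 1)
    (hπnonneg : ∀ s a, 0 ≤ π s a) (hπsum : ∀ s, ∑ a, π s a = 1)
    (γ : ℝ) (hγ0 : 0 ≤ γ) (hγ1 : γ < 1)
    (d₁ : S → A → ℝ) (hdpos : ∀ s a, 0 < d₁ s a)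
    (dS : S → ℝ) (hdS : ∀ s, dS s = ∑ a, d₁ s a)  -- state marginal of d₁
    (gld : S → A → ℝ)   -- ∇_θ log d₁(s,a)
    (gldS : S → ℝ)      -- ∇_θ log d₁(s)
    (glπ : S → A → ℝ)   -- ∇_θ log π_θ(a|s)
    (hdecomp : ∀ s a, gld s a = gldS s + glπ s a)
    -- the (γ = 1) backward identity characterizing ∇log d₁
    (hldg : ∀ s' a', d₁ s' a' * gld s' a' - d₁ s' a' * glπ s' a' =
      ∑ s, ∑ a, d₁ s a * P s a s' * π s' a' * gld s a)
    (Q : S → A → ℝ)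
    (hQ : ∀ s a, Q s a = r s a + γ * ∑ s', P s a s' * ∑ a', π s' a' * Q s' a')
    (V : S → ℝ) (hV : ∀ s, V s = ∑ a, π s a * Q s a) :
    ∑ s, ∑ a, d₁ s a * gld s a * r s a =
      (∑ s, ∑ a, d₁ s a * Q s a * glπ s a) +
      (1 - γ) * ∑ s, dS s * gldS s * V s :=
  stmt_13_general P π r hπsum γ d₁ dS hdS gld gldS glπ hdecomp hldg Q hQ V hV
end
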